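/- Let Ω and D be as above, M = (f₁,f₂)(-f₁,-f₂) of type (M7) with (f₁,f₂,f₃) a 3-cycle of D, and let Ω', D' with M' = (-f'₁,f'₂,f'₃)(-f'₃,-f'₂,f'₁) of type (M3) for a 3-cycle (f'₁,f'₂,f'₃) of D'. Then for the bijection g : Ω → Ω' with g(fᵢ) = f'ᵢ (commuting with negation), g∘M∘g⁻¹∘M' is a product of two distinct commuting 3-cycles. -/

import Mathlib

/-- The set of oriented edges of a triangle: `(i, true)` is `eᵢ`, `(i, false)` is `-eᵢ`. -/
abbrev Ω : Type := ZMod 3 × Bool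

/-- The orientation-reversing involution `e ↦ -e`. -/
def neg (x : Ω) : Ω := (x.1, !x.2)

/-- The rotation `D = (e₁,e₂,e₃)(-e₃,-e₂,-e₁)`. -/
def D : Equiv.Perm Ω where
  toFun x := if x.2 then (x.1 + 1, true) else (x.1 - 1, false)
  invFun x := if x.2 then (x.1 - 1, true) else (x.1 + 1, false)
  left_inv := by decide
  right_inv := by decide

/-- `eᵢ` for `i = 1, 2, 3` (indices taken mod 3, so `e₃ = ed 0`). -/
def ed (i : ZMod 3) : Ω := (i, true)

/-- `(f₁,f₂,f₃)` is a 3-cycle of the permutation `σ`. -/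
def IsCycleOf (σ : Equiv.Perm Ω) (f₁ f₂ f₃ : Ω) : Prop :=
  σ f₁ = f₂ ∧ σ f₂ = f₃ ∧ σ f₃ = f₁ ∧ f₁ ≠ f₂ ∧ f₂ ≠ f₃ ∧ f₁ ≠ f₃

/-- `M = (-f₁,f₂,f₃)(-f₃,-f₂,f₁)`. -/
def M3form (M : Equiv.Perm Ω) (f₁ f₂ f₃ : Ω) : Prop :=
  M (neg f₁) = f₂ ∧ M f₂ = f₃ ∧ M f₃ = neg f₁ ∧
  M (neg f₃) = neg f₂ ∧ M (neg f₂) = f₁ ∧ M f₁ = neg f₃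

/-- `M = (f₁,-f₂)(f₂,-f₁)` with `f₃, -f₃` fixed. -/
def M4form (M : Equiv.Perm Ω) (f₁ f₂ f₃ : Ω) : Prop :=
  M f₁ = neg f₂ ∧ M (neg f₂) = f₁ ∧ M f₂ = neg f₁ ∧ M (neg f₁) = f₂ ∧
  M f₃ = f₃ ∧ M (neg f₃) = neg f₃

/-- `M = (f₁,f₂)(-f₁,-f₂)` with `f₃, -f₃` fixed. -/
def M7form (M : Equiv.Perm Ω) (f₁ f₂ f₃ : Ω) : Prop :=
  M f₁ = f₂ ∧ M f₂ = f₁ ∧ M (neg f₁) = neg f₂ ∧ M (neg f₂) = neg f₁ ∧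
  M f₃ = f₃ ∧ M (neg f₃) = neg f₃

def M3type (M : Equiv.Perm Ω) : Prop := ∃ f₁ f₂ f₃, IsCycleOf D f₁ f₂ f₃ ∧ M3form M f₁ f₂ f₃
def M6type (M : Equiv.Perm Ω) : Prop := ∃ f₁ f₂ f₃, IsCycleOf D⁻¹ f₁ f₂ f₃ ∧ M3form M f₁ f₂ f₃
def M4type (M : Equiv.Perm Ω) : Prop := ∃ f₁ f₂ f₃, IsCycleOf D f₁ f₂ f₃ ∧ M4form M f₁ f₂ f₃
def M7type (M : Equiv.Perm Ω) : Prop := ∃ f₁ f₂ f₃, IsCycleOf D f₁ f₂ f₃ ∧ M7form M f₁ f₂ f₃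

/-- The two conditions satisfied by every z-monodromy:
`M(e) = e' → M(-e') = -e`, and `M(e) ≠ -e`. -/
def Cond (M : Equiv.Perm Ω) : Prop :=
  (∀ e, M (neg (M e)) = neg e) ∧ (∀ e, M e ≠ neg e)

/-- `σ` is a product of two distinct commuting 3-cycles, i.e. has cycle type (3,3). -/
def Two3 (σ : Equiv.Perm Ω) : Prop := σ.cycleType = {3, 3}

/-- The 3-cycle `(a,b,c)` as a permutation. -/
def cyc (a b c : Ω) : Equiv.Perm Ω := Equiv.swap a b * Equiv.swap b c

/-!
Conjugating `M'` by `g` gives a permutation of the first triangle of the same form (M3), so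
`g M g⁻¹ M'` is conjugate to `M N` with `N = g⁻¹ M' g`, and `M N = (-f₁, f₁, -f₃)(f₂, f₃, -f₂)`.
The rotation `D` preserves orientation, so the six edges `±fᵢ` are distinct and exhaust `Ω`:
`M N` cubes to the identity without fixed points, and a fixed-point-free permutation of prime
order `p` has only `p`-cycles.
-/

open Equiv

theorem Equiv.Perm.cycleType_eq_replicate_of_pow_prime_eq_one {α : Type*} [Fintype α]
    [DecidableEq α] {σ : Perm α} {p : ℕ} [hp : Fact p.Prime] (hσ : σ ^ p = 1)
    (hfix : ∀ x, σ x ≠ x) : σ.cycleType = Multiset.replicate (Fintype.card α / p) p := by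
  cases isEmpty_or_nonempty α
  · simp [Subsingleton.elim σ 1, Fintype.card_eq_zero]
  have hne : σ ≠ 1 := fun h => hfix (Classical.arbitrary α) (by simp [h])
  have horder : orderOf σ = p := orderOf_eq_prime hσ hne
  obtain ⟨n, hn⟩ := σ.cycleType_prime_order (horder ▸ hp.out)
  have hsupp : σ.support = Finset.univ := Finset.eq_univ_of_forall fun x => by simpa using hfix x
  have hsum := σ.sum_cycleType
  rw [hn, hsupp, Finset.card_univ, Multiset.sum_replicate, smul_eq_mul, horder] at hsum
  rw [hn, horder, ← hsum, Nat.mul_div_cancel _ hp.out.pos]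

theorem ne_neg_of_snd_eq {x y : Ω} (h : x.2 = y.2) : x ≠ neg y := by
  rintro rfl
  simp [neg] at h

theorem snd_D (x : Ω) : (D x).2 = x.2 := by
  revert x; decide

theorem eq_or_eq_neg_of_isCycleOf_D {f₁ f₂ f₃ : Ω} (hc : IsCycleOf D f₁ f₂ f₃) (x : Ω) :
    x = f₁ ∨ x = f₂ ∨ x = f₃ ∨ x = neg f₁ ∨ x = neg f₂ ∨ x = neg f₃ := by
  obtain ⟨rfl, rfl, -⟩ := hc
  revert f₁ x; decide

theorem M3form_conj {M g : Perm Ω} (hg : ∀ x, g (neg x) = neg (g x)) {f₁ f₂ f₃ : Ω}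
    (hM : M3form M (g f₁) (g f₂) (g f₃)) : M3form (g⁻¹ * M * g) f₁ f₂ f₃ := by
  have hg' : ∀ x, g⁻¹ (neg x) = neg (g⁻¹ x) := fun x => by
    rw [Perm.inv_eq_iff_eq, hg, Perm.coe_inv, apply_symm_apply]
  obtain ⟨h1, h2, h3, h4, h5, h6⟩ := hM
  refine ⟨?_, ?_, ?_, ?_, ?_, ?_⟩ <;>
    simp only [Perm.mul_apply, hg, hg', h1, h2, h3, h4, h5, h6, Perm.coe_inv, symm_apply_apply]

theorem two3_mul_of_M7form_of_M3form {M N : Perm Ω} {f₁ f₂ f₃ : Ω}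
    (hc : IsCycleOf D f₁ f₂ f₃) (hM : M7form M f₁ f₂ f₃) (hN : M3form N f₁ f₂ f₃) :
    Two3 (M * N) := by
  have hcover := eq_or_eq_neg_of_isCycleOf_D hc
  obtain ⟨hD₁, hD₂, -, -, h₂₃, h₁₃⟩ := hc
  obtain ⟨m1, m2, m3, m4, m5, m6⟩ := hM
  obtain ⟨n1, n2, n3, n4, n5, n6⟩ := hN
  have h₁₃' : f₁ ≠ neg f₃ := ne_neg_of_snd_eq (by rw [← hD₂, ← hD₁, snd_D, snd_D])
  have h₃₂' : f₃ ≠ neg f₂ := ne_neg_of_snd_eq (by rw [← hD₂, snd_D])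
  have e1 : (M * N) (neg f₁) = f₁ := by rw [Perm.mul_apply, n1, m2]
  have e2 : (M * N) f₁ = neg f₃ := by rw [Perm.mul_apply, n6, m6]
  have e3 : (M * N) (neg f₃) = neg f₁ := by rw [Perm.mul_apply, n4, m4]
  have e4 : (M * N) f₂ = f₃ := by rw [Perm.mul_apply, n2, m5]
  have e5 : (M * N) f₃ = neg f₂ := by rw [Perm.mul_apply, n3, m3]
  have e6 : (M * N) (neg f₂) = f₂ := by rw [Perm.mul_apply, n5, m1]
  have := Fact.mk Nat.prime_three
  refine (Perm.cycleType_eq_replicate_of_pow_prime_eq_one (p := 3) ?_ ?_).trans rfl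
  · refine Perm.ext fun x => ?_
    rcases hcover x with rfl | rfl | rfl | rfl | rfl | rfl <;>
      simp only [pow_succ, pow_zero, one_mul, Perm.mul_apply, e1, e2, e3, e4, e5, e6, Perm.one_apply]
  · intro x
    rcases hcover x with rfl | rfl | rfl | rfl | rfl | rfl
    · rw [e2]; exact h₁₃'.symm
    · rw [e4]; exact h₂₃.symm
    · rw [e5]; exact h₃₂'.symm
    · rw [e1]; exact ne_neg_of_snd_eq rfl
    · rw [e6]; exact ne_neg_of_snd_eq rfl
    · rw [e3]; exact fun h => h₁₃ (by simpa [neg, Prod.ext_iff] using h)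

theorem stmt_18_general (f₁ f₂ f₃ f₁' f₂' f₃' : Ω)
    (M M' g : Equiv.Perm Ω)
    (hc : IsCycleOf D f₁ f₂ f₃)
    (hM : M7form M f₁ f₂ f₃) (hM' : M3form M' f₁' f₂' f₃')
    (hg : ∀ x, g (neg x) = neg (g x))
    (h1 : g f₁ = f₁') (h2 : g f₂ = f₂') (h3 : g f₃ = f₃') :
    Two3 (g * M * g⁻¹ * M') := by
  subst h1 h2 h3
  have hconj : g * M * g⁻¹ * M' = g * (M * (g⁻¹ * M' * g)) * g⁻¹ := by group
  rw [Two3, hconj, Perm.cycleType_conj]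
  exact two3_mul_of_M7form_of_M3form hc hM (M3form_conj hg hM')

/-- If `M = (f₁,f₂)(-f₁,-f₂)` is of type (M7) for a 3-cycle `(f₁,f₂,f₃)` of
`D`, `M′` is of type (M3) for a 3-cycle `(f′₁,f′₂,f′₃)` of the rotation `D′` of
the second triangle, and `g` commutes with negation and satisfies `g(fᵢ) = f′ᵢ`,
then `g ∘ M ∘ g⁻¹ ∘ M′` is a product of two distinct commuting 3-cycles. -/
theorem stmt_18 (D' : Equiv.Perm Ω) (f₁ f₂ f₃ f₁' f₂' f₃' : Ω)
    (M M' g : Equiv.Perm Ω)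
    (hc : IsCycleOf D f₁ f₂ f₃) (hc' : IsCycleOf D' f₁' f₂' f₃')
    (hM : M7form M f₁ f₂ f₃) (hM' : M3form M' f₁' f₂' f₃')
    (hg : ∀ x, g (neg x) = neg (g x))
    (h1 : g f₁ = f₁') (h2 : g f₂ = f₂') (h3 : g f₃ = f₃') :
    Two3 (g * M * g⁻¹ * M') :=
  stmt_18_general f₁ f₂ f₃ f₁' f₂' f₃' M M' g hc hM hM' hg h1 h2 h3
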